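/- Let p ≥ 1 be an integer and 𝐇 a set of graphs such that every 𝐇-free graph is perfect. Then every (pK₂ ∪ 𝐇)-free graph G satisfies χ(G) ≤ C(ω(G)+2p, 2p+1), where C(a,b) denotes the binomial coefficient. -/

import Mathlib

/-!
Induction on `p`. For `p = 0` the graph is `𝐇`-free, hence perfect, hence `ω`-colourable.

For the step from `p` to `p + 1`, fix a maximum clique `v 0, …, v (w - 1)`. Every vertex has a
non-neighbour on it. The vertices whose only non-neighbour on the clique is `v i` form a stable set.
Any other vertex has a first and a second non-neighbour `v i`, `v j` with `i < j`. The set of these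
vertices is anticomplete to the edge `v i v j`, so adding that edge to an induced `pK₂ ∪ H` inside
it gives an induced `(p + 1)K₂ ∪ H` in `G`; and it is complete to the `j - 1` clique vertices `v k`
with `k < j`, `k ≠ i`, so its clique number is at most `w + 1 - j`. Giving each part its own
palette, the bound follows from
`w + ∑_{j < w} j * C(w - j + 2p + 1, 2p + 1) = C(w + 2p + 2, 2p + 3)`.
-/

open SimpleGraph

/-- `pK₂`: the disjoint union of `p` copies of the single-edge graph `K₂`. -/
def pK2 (p : ℕ) : SimpleGraph (Fin p × Fin 2) where
  Adj x y := x.1 = y.1 ∧ x.2 ≠ y.2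
  symm := ⟨fun _ _ h => ⟨h.1.symm, h.2.symm⟩⟩
  loopless := ⟨fun _ h => h.2 rfl⟩

/-- A graph is perfect if every induced subgraph has chromatic number equal to
its clique number. -/
def IsPerfect {V : Type} (G : SimpleGraph V) : Prop :=
  ∀ s : Set V, (G.induce s).chromaticNumber = ((G.induce s).cliqueNum : ℕ∞)

open Finset

theorem Nat.sum_antidiagonal_mul_choose_add (r n : ℕ) :
    ∑ ij ∈ antidiagonal n, ij.1 * (ij.2 + r).choose r = (n + r + 1).choose (r + 2) := by
  induction n with
  | zero => simp
  | succ n ih =>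
    have hockey : ∑ ij ∈ antidiagonal n, (ij.2 + r).choose r = (n + r + 1).choose (r + 1) := by
      simpa only [add_comm] using sum_antidiagonal_choose_add r n
    simp only [Nat.sum_antidiagonal_succ, zero_mul, zero_add, add_one_mul, sum_add_distrib, ih,
      hockey]
    rw [add_right_comm n 1 r, Nat.choose_succ_succ (n + r + 1) (r + 1)]
    ring

theorem Nat.add_sum_fin_mul_choose (w r : ℕ) :
    w + ∑ j : Fin w, (j : ℕ) * (w - j + r).choose r = (w + r + 1).choose (r + 2) := by
  have h := Nat.sum_antidiagonal_mul_choose_add r w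
  rw [Nat.sum_antidiagonal_eq_sum_range_succ_mk, sum_range_succ, Nat.sub_self, zero_add,
    Nat.choose_self, mul_one] at h
  rw [Fin.sum_univ_eq_sum_range (fun j => j * (w - j + r).choose r), add_comm w, h]

namespace SimpleGraph

variable {V V₁ V₂ : Type*} {G : SimpleGraph V} {G₁ : SimpleGraph V₁} {G₂ : SimpleGraph V₂}

def Embedding.sumElim (f : G₁ ↪g G) (g : G₂ ↪g G) (hne : ∀ a b, f a ≠ g b)
    (hadj : ∀ a b, ¬ G.Adj (f a) (g b)) : G₁ ⊕g G₂ ↪g G where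
  toFun := Sum.elim f g
  inj' := by
    rintro (a | b) (a' | b') h
    · exact congrArg _ (f.injective h)
    · exact absurd h (hne a b')
    · exact absurd h.symm (hne a' b)
    · exact congrArg _ (g.injective h)
  map_rel_iff' := by
    rintro (a | b) (a' | b')
    · exact f.map_adj_iff
    · exact iff_of_false (hadj a b') (not_adj_sum_inl_inr a b')
    · exact iff_of_false (fun h => hadj a' b h.symm) (fun h => not_adj_sum_inl_inr a' b h.symm)
    · exact g.map_adj_iff

theorem IsClique.card_add_card_le_cliqueNum [Finite V] {s t : Finset V} (hs : G.IsClique s)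
    (ht : G.IsClique t) (hst : ∀ x ∈ s, ∀ y ∈ t, G.Adj x y) : #s + #t ≤ G.cliqueNum := by
  classical
  have hdisj : Disjoint s t :=
    Finset.disjoint_left.2 fun _ hx hxt => G.irrefl (hst _ hx _ hxt)
  have hclique : G.IsClique (s ∪ t : Finset V) := by
    rw [coe_union, IsClique, Set.pairwise_union]
    exact ⟨hs, ht, fun x hx y hy _ => ⟨hst x hx y hy, (hst x hx y hy).symm⟩⟩
  rw [← card_union_of_disjoint hdisj]
  exact hclique.card_le_cliqueNum

theorem cliqueNum_induce_add_card_le [Finite V] (s : Set V) {t : Finset V} (ht : G.IsClique t)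
    (hst : ∀ x ∈ s, ∀ y ∈ t, G.Adj x y) : (G.induce s).cliqueNum + #t ≤ G.cliqueNum := by
  obtain ⟨u, hu⟩ := (G.induce s).exists_isNClique_cliqueNum
  rw [isNClique_induce_iff] at hu
  rw [← hu.card_eq]
  refine hu.isClique.card_add_card_le_cliqueNum ht fun x hx y hy => hst x ?_ y hy
  obtain ⟨y, -, rfl⟩ := mem_map.1 hx
  exact y.2

theorem colorable_sum_of_forall_mem {ι : Type*} [Fintype ι] (P : ι → Set V) (n : ι → ℕ)
    (hP : ∀ x, ∃ q, x ∈ P q) (hcol : ∀ q, (G.induce (P q)).Colorable (n q)) :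
    G.Colorable (∑ q, n q) := by
  choose part hpart using hP
  have c := fun q => (hcol q).some
  let C : G.Coloring (Σ q, Fin (n q)) :=
    Coloring.mk (fun x => ⟨part x, c (part x) ⟨x, hpart x⟩⟩) fun {x y} hxy => by
      suffices ∀ q r (hx : x ∈ P q) (hy : y ∈ P r),
          (⟨q, c q ⟨x, hx⟩⟩ : Σ q, Fin (n q)) ≠ ⟨r, c r ⟨y, hy⟩⟩ from this _ _ _ _
      rintro q r hx hy h
      obtain ⟨rfl, h⟩ := Sigma.mk.inj_iff.1 h
      exact (c q).valid (show (G.induce (P q)).Adj ⟨x, hx⟩ ⟨y, hy⟩ from hxy) (eq_of_heq h)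
  simpa using C.colorable

section MaximumClique

variable {w : ℕ} (v : completeGraph (Fin w) ↪g G)

def adjAllBut (i : Fin w) : Set V := {x | ∀ k, k ≠ i → G.Adj x (v k)}

def firstNonAdjPair (i j : Fin w) : Set V :=
  {x | ¬ G.Adj x (v i) ∧ ¬ G.Adj x (v j) ∧ ∀ k < j, k ≠ i → G.Adj x (v k)}

theorem isClique_map_completeGraph_embedding (I : Finset (Fin w)) :
    G.IsClique (I.map v.toEmbedding : Set V) := by
  intro x hx y hy hxy
  obtain ⟨k, -, rfl⟩ := mem_map.1 hx
  obtain ⟨l, -, rfl⟩ := mem_map.1 hy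
  exact v.map_adj_iff.2 fun hkl => hxy (congrArg v hkl)

variable [Finite V] {v} (hw : G.cliqueNum ≤ w)
include hw

theorem exists_not_adj_of_cliqueNum_le (x : V) : ∃ k, ¬ G.Adj x (v k) := by
  by_contra! hx
  have := IsClique.card_add_card_le_cliqueNum (s := {x}) (by simp)
    (isClique_map_completeGraph_embedding v univ) (by simpa using hx)
  rw [card_singleton, card_map, card_univ, Fintype.card_fin] at this
  omega

theorem exists_mem_adjAllBut_or_firstNonAdjPair (x : V) :
    (∃ i, x ∈ adjAllBut v i) ∨ ∃ i j, i < j ∧ x ∈ firstNonAdjPair v i j := by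
  classical
  set M := univ.filter fun k => ¬ G.Adj x (v k)
  have hMne : M.Nonempty := by
    simpa [M, Finset.Nonempty] using exists_not_adj_of_cliqueNum_le hw x
  set i := M.min' hMne
  have hi : i ∈ M := M.min'_mem hMne
  by_cases hrest : (M.erase i).Nonempty
  · set j := (M.erase i).min' hrest
    have hj : j ∈ M.erase i := (M.erase i).min'_mem hrest
    have hij : i < j :=
      lt_of_le_of_ne (M.min'_le _ (mem_of_mem_erase hj)) (ne_of_mem_erase hj).symm
    refine Or.inr ⟨i, j, hij, (mem_filter.1 hi).2, (mem_filter.1 (mem_of_mem_erase hj)).2,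
      fun k hkj hki => ?_⟩
    by_contra hk
    have hk : k ∈ M.erase i := mem_erase.2 ⟨hki, mem_filter.2 ⟨mem_univ _, hk⟩⟩
    exact (hkj.trans_le ((M.erase i).min'_le k hk)).false
  · refine Or.inl ⟨i, fun k hki => ?_⟩
    by_contra hk
    exact hrest ⟨k, mem_erase.2 ⟨hki, mem_filter.2 ⟨mem_univ _, hk⟩⟩⟩

theorem not_adj_of_mem_adjAllBut {i : Fin w} {x y : V} (hx : x ∈ adjAllBut v i)
    (hy : y ∈ adjAllBut v i) : ¬ G.Adj x y := by
  classical
  intro hxy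
  have := IsClique.card_add_card_le_cliqueNum (s := {x, y})
    (by rw [coe_pair]; exact isClique_pair.2 fun _ => hxy)
    (isClique_map_completeGraph_embedding v (univ.erase i)) (by
      simp only [mem_insert, mem_singleton, mem_map, mem_erase, mem_univ, and_true]
      rintro z (rfl | rfl) _ ⟨k, hki, rfl⟩
      exacts [hx k hki, hy k hki])
  rw [card_pair hxy.ne, card_map, card_erase_of_mem (mem_univ _), card_univ,
    Fintype.card_fin] at this
  have := i.pos
  omega

theorem cliqueNum_induce_firstNonAdjPair_le {i j : Fin w} (hij : i < j) :
    (G.induce (firstNonAdjPair v i j)).cliqueNum ≤ w + 1 - j := by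
  classical
  have := cliqueNum_induce_add_card_le (firstNonAdjPair v i j)
    (isClique_map_completeGraph_embedding v ((Iio j).erase i)) (by
      simp only [mem_map, mem_erase, mem_Iio]
      rintro x ⟨-, -, hx⟩ _ ⟨k, ⟨hki, hkj⟩, rfl⟩
      exact hx k hkj hki)
  rw [card_map, card_erase_of_mem (mem_Iio.2 hij), Fin.card_Iio] at this
  omega

end MaximumClique

theorem colorable_of_forall_anticomplete_edge [Finite V] (f : ℕ → ℕ) (hf : Monotone f)
    (h : ∀ a b (A : Set V), G.Adj a b → (∀ x ∈ A, ¬ G.Adj x a ∧ ¬ G.Adj x b) →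
      (G.induce A).Colorable (f (G.induce A).cliqueNum)) :
    G.Colorable (G.cliqueNum + ∑ j : Fin G.cliqueNum, j * f (G.cliqueNum + 1 - j)) := by
  obtain ⟨_, hK⟩ := G.exists_isNClique_cliqueNum
  set w := G.cliqueNum
  let v : completeGraph (Fin w) ↪g G := topEmbeddingOfNotCliqueFree hK.not_cliqueFree
  -- A pair `i < j` is encoded as `⟨j, i⟩ : Σ j : Fin w, Fin j`, so that exactly `j` parts
  -- share the bound `f (w + 1 - j)`.
  let P : Fin w ⊕ (Σ j : Fin w, Fin j) → Set V :=
    Sum.elim (adjAllBut v) fun q => firstNonAdjPair v (Fin.castLE q.1.is_lt.le q.2) q.1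
  let n : Fin w ⊕ (Σ j : Fin w, Fin j) → ℕ := Sum.elim (fun _ => 1) fun q => f (w + 1 - q.1)
  have hcover : ∀ x, ∃ q, x ∈ P q := by
    intro x
    rcases exists_mem_adjAllBut_or_firstNonAdjPair le_rfl x with ⟨i, hx⟩ | ⟨i, j, hij, hx⟩
    exacts [⟨.inl i, hx⟩, ⟨.inr ⟨j, ⟨i, hij⟩⟩, hx⟩]
  have hcol : ∀ q, (G.induce (P q)).Colorable (n q) := by
    rintro (i | ⟨j, i⟩)
    · exact colorable_one_iff.2 <| eq_bot_iff_forall_not_adj.2 fun x y =>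
        not_adj_of_mem_adjAllBut (x := x.1) (y := y.1) le_rfl x.2 y.2
    · have hij : Fin.castLE j.is_lt.le i < j := i.is_lt
      refine (h _ _ _ (v.map_adj_iff.2 hij.ne) fun x hx => ⟨hx.1, hx.2.1⟩).mono
        (hf (cliqueNum_induce_firstNonAdjPair_le le_rfl hij))
  simpa [P, n, Fintype.sum_sum_type, Fintype.sum_sigma] using
    colorable_sum_of_forall_mem P n hcover hcol

end SimpleGraph

section InducedMatching

variable {V V₁ : Type*} {G : SimpleGraph V} {G₁ : SimpleGraph V₁}

def pK2.zeroSumIso : pK2 0 ⊕g G₁ ≃g G₁ where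
  toEquiv := Equiv.emptySum _ _
  map_rel_iff' := by
    rintro (⟨⟨_, h⟩, _⟩ | a) (⟨⟨_, h'⟩, _⟩ | b) <;> first | omega | simp

def pK2.addIso (m n : ℕ) : pK2 (m + n) ≃g pK2 m ⊕g pK2 n where
  toEquiv := (finSumFinEquiv.symm.prodCongr (Equiv.refl _)).trans (Equiv.sumProdDistrib _ _ _)
  map_rel_iff' := by
    rintro ⟨a, c⟩ ⟨b, d⟩
    obtain ⟨a, rfl⟩ := finSumFinEquiv.surjective a
    obtain ⟨b, rfl⟩ := finSumFinEquiv.surjective b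
    rcases a with a | a <;> rcases b with b | b <;> simp [pK2, Fin.ext_iff] <;> omega

def pK2.embeddingOfAdj {a b : V} (h : G.Adj a b) : pK2 1 ↪g G where
  toFun x := ![a, b] x.2
  inj' := by
    rintro ⟨i, c⟩ ⟨i', c'⟩ hx
    fin_cases i; fin_cases i'; fin_cases c <;> fin_cases c' <;> simp_all [h.ne, h.ne.symm]
  map_rel_iff' := by
    rintro ⟨i, c⟩ ⟨i', c'⟩
    fin_cases i; fin_cases i'; fin_cases c <;> fin_cases c' <;> simp [pK2]
    exacts [h, h.symm]

theorem isEmpty_embedding_of_isEmpty_pK2_zero_sum (h : IsEmpty (pK2 0 ⊕g G₁ ↪g G)) :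
    IsEmpty (G₁ ↪g G) :=
  ⟨fun f => h.false (f.comp pK2.zeroSumIso.toEmbedding)⟩

theorem isEmpty_pK2_sum_embedding_induce {p : ℕ} {A : Set V} {a b : V} (hab : G.Adj a b)
    (hA : ∀ x ∈ A, ¬ G.Adj x a ∧ ¬ G.Adj x b) (h : IsEmpty (pK2 (p + 1) ⊕g G₁ ↪g G)) :
    IsEmpty (pK2 p ⊕g G₁ ↪g G.induce A) := by
  have hend : ∀ e, pK2.embeddingOfAdj hab e = a ∨ pK2.embeddingOfAdj hab e = b := by
    rintro ⟨_, c⟩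
    fin_cases c
    exacts [Or.inl rfl, Or.inr rfl]
  have hfar : ∀ y ∈ A, ∀ e,
      pK2.embeddingOfAdj hab e ≠ y ∧ ¬ G.Adj (pK2.embeddingOfAdj hab e) y := by
    intro y hy e
    obtain ⟨hya, hyb⟩ := hA y hy
    rcases hend e with he | he <;> rw [he]
    · exact ⟨by rintro rfl; exact hyb hab, fun h' => hya h'.symm⟩
    · exact ⟨by rintro rfl; exact hya hab.symm, fun h' => hyb h'.symm⟩
  refine ⟨fun f => h.false ?_⟩
  let split : pK2 (p + 1) ⊕g G₁ ≃g pK2 1 ⊕g (pK2 p ⊕g G₁) :=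
    (Iso.sumCongr ((pK2.addIso p 1).trans Iso.sumComm) Iso.refl).trans Iso.sumAssoc
  refine (Embedding.sumElim (pK2.embeddingOfAdj hab) ((Embedding.induce A).comp f) ?_ ?_).comp
    split.toEmbedding
  exacts [fun e y => (hfar _ (f y).2 e).1, fun e y => (hfar _ (f y).2 e).2]

end InducedMatching

theorem IsPerfect.colorable_cliqueNum {V : Type} [Finite V] {G : SimpleGraph V}
    (h : IsPerfect G) : G.Colorable G.cliqueNum := by
  rw [← chromaticNumber_le_iff_colorable, chromaticNumber_congr (induceUnivIso G).symm, h]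
  exact_mod_cast cliqueNum_induce_le _

theorem colorable_choose_of_isEmpty_pK2_sum_embedding {ι : Type} {W : ι → Type}
    (H : ∀ i, SimpleGraph (W i))
    (hperf : ∀ (V : Type) [Fintype V] (G : SimpleGraph V),
      (∀ i, IsEmpty (H i ↪g G)) → IsPerfect G)
    (p : ℕ) {V : Type} [Finite V] (G : SimpleGraph V)
    (hG : ∀ i, IsEmpty ((pK2 p ⊕g H i) ↪g G)) :
    G.Colorable ((G.cliqueNum + 2 * p).choose (2 * p + 1)) := by
  induction p generalizing V with
  | zero =>
    have := Fintype.ofFinite V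
    simpa using (hperf V G fun i =>
      isEmpty_embedding_of_isEmpty_pK2_zero_sum (hG i)).colorable_cliqueNum
  | succ p ih =>
    have hsplit := colorable_of_forall_anticomplete_edge (G := G)
      (fun m => (m + 2 * p).choose (2 * p + 1)) (fun _ _ h => Nat.choose_le_choose _ (by omega))
      fun _ _ A hab hA => ih (G.induce A) fun i => isEmpty_pK2_sum_embedding_induce hab hA (hG i)
    have hcount : G.cliqueNum + ∑ j : Fin G.cliqueNum,
        j * (G.cliqueNum + 1 - j + 2 * p).choose (2 * p + 1) =
        (G.cliqueNum + 2 * (p + 1)).choose (2 * (p + 1) + 1) := by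
      calc _ = (G.cliqueNum + (2 * p + 1) + 1).choose (2 * p + 1 + 2) := by
            rw [← Nat.add_sum_fin_mul_choose]
            congr 1
            refine Finset.sum_congr rfl fun j _ => ?_
            rw [show G.cliqueNum + 1 - j + 2 * p = G.cliqueNum - j + (2 * p + 1) by omega]
        _ = _ := by ring_nf
    rwa [← hcount]

theorem stmt_9_general (p : ℕ) {ι : Type} (W : ι → Type)
    (H : ∀ i, SimpleGraph (W i))
    (hperf : ∀ (V : Type) [Fintype V] (G : SimpleGraph V),
      (∀ i, IsEmpty (H i ↪g G)) → IsPerfect G)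
    (V : Type) [Fintype V] (G : SimpleGraph V)
    (hG : ∀ i, IsEmpty ((pK2 p ⊕g H i) ↪g G)) :
    G.chromaticNumber ≤ (Nat.choose (G.cliqueNum + 2 * p) (2 * p + 1) : ℕ∞) :=
  chromaticNumber_le_iff_colorable.2 (colorable_choose_of_isEmpty_pK2_sum_embedding H hperf p G hG)

theorem stmt_9 (p : ℕ) (hp : 1 ≤ p) {ι : Type} (W : ι → Type) [∀ i, Fintype (W i)]
    (H : ∀ i, SimpleGraph (W i))
    (hperf : ∀ (V : Type) [Fintype V] (G : SimpleGraph V),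
      (∀ i, IsEmpty (H i ↪g G)) → IsPerfect G)
    (V : Type) [Fintype V] (G : SimpleGraph V)
    (hG : ∀ i, IsEmpty ((pK2 p ⊕g H i) ↪g G)) :
    G.chromaticNumber ≤ (Nat.choose (G.cliqueNum + 2 * p) (2 * p + 1) : ℕ∞) :=
  stmt_9_general p W H hperf V G hG
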